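/- arXiv:1909.07557 — 6 statements merged into one kernel-verified Lean document; each statement's English description precedes it below -/
import Mathlib

section
/- In a sequence of rational swaps under strict preferences, an object never visits an agent twice: if σ_i(q) = σ_j(q) with i < j, then σ_d(q) = σ_i(q) for every d with i ≤ d ≤ j. -/
/-- An assignment maps agents to objects bijectively (agents and objects are both `Fin n`;
object `o_i` is identified with index `i`, agent `i` initially holds `o_i`). -/
abbrev Assignment (n : ℕ) := Equiv.Perm (Fin n)

/-- `u j o` is agent `j`'s utility for object `o`; strict linear preferences mean each `u j`
is injective, and `o ≻_j o'` iff `u j o > u j o'`. -/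
def StrictPref {n : ℕ} (u : Fin n → Fin n → ℕ) : Prop := ∀ j, Function.Injective (u j)

/-- A rational swap under strict preferences: two adjacent agents exchange objects, each
strictly preferring the object received. -/
def SwapStep {n : ℕ} (adj : Fin n → Fin n → Prop) (u : Fin n → Fin n → ℕ)
    (σ σ' : Assignment n) : Prop :=
  ∃ a b : Fin n, adj a b ∧ u a (σ b) > u a (σ a) ∧ u b (σ a) > u b (σ b) ∧
    σ' = σ * Equiv.swap a b

/-- `σseq 0, σseq 1, …, σseq t` is a sequence of swaps. -/
def SwapSeq {n : ℕ} (adj : Fin n → Fin n → Prop) (u : Fin n → Fin n → ℕ)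
    (σseq : ℕ → Assignment n) (t : ℕ) : Prop :=
  ∀ m < t, SwapStep adj u (σseq m) (σseq (m + 1))

/-- Adjacency of the path `0 – 1 – ⋯ – (n-1)`. -/
def pathAdj {n : ℕ} (i j : Fin n) : Prop := i.val + 1 = j.val ∨ j.val + 1 = i.val

/-- under strict preferences, an object never visits an agent twice:
if agent `q` holds the same object at steps `i` and `j` (`i < j`), it holds it throughout. -/
theorem object_never_visits_twice {n : ℕ} (G : SimpleGraph (Fin n))
    (u : Fin n → Fin n → ℕ) (hu : StrictPref u)
    (t : ℕ) (σseq : ℕ → Assignment n) (hseq : SwapSeq G.Adj u σseq t)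
    (q : Fin n) (i j : ℕ) (hij : i < j) (hjt : j ≤ t)
    (heq : σseq i q = σseq j q) :
    ∀ d, i ≤ d → d ≤ j → σseq d q = σseq i q := by
  have step : ∀ m < t, u q (σseq m q) ≤ u q (σseq (m+1) q) := by
    intro m hm
    obtain ⟨a, b, -, hab, hba, hσ'⟩ := hseq m hm
    have h1 : σseq (m+1) q = σseq m (Equiv.swap a b q) := by rw [hσ']; rfl
    rw [h1]
    by_cases hqa : q = a
    · subst hqa; rw [Equiv.swap_apply_left]; exact le_of_lt hab
    · by_cases hqb : q = b
      · subst hqb; rw [Equiv.swap_apply_right]; exact le_of_lt hba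
      · rw [Equiv.swap_apply_of_ne_of_ne hqa hqb]
  have mono : ∀ d e : ℕ, d ≤ e → e ≤ t → u q (σseq d q) ≤ u q (σseq e q) := by
    intro d e hde het
    induction e with
    | zero => have : d = 0 := Nat.le_zero.mp hde; subst this; exact le_rfl
    | succ e ih =>
      rcases Nat.lt_or_ge d (e+1) with h | h
      · exact le_trans (ih (by omega) (by omega)) (step e (by omega))
      · have : d = e + 1 := by omega
        subst this; exact le_rfl
  intro d hid hdj
  have h1 : u q (σseq i q) ≤ u q (σseq d q) := mono i d hid (by omega)
  have h2 : u q (σseq d q) ≤ u q (σseq j q) := mono d j hdj hjt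
  have h3 : u q (σseq i q) = u q (σseq j q) := by rw [heq]
  exact hu q (by omega)
end

section
/- When the network is a path 1–2–...–n, in any sequence of rational swaps under strict preferences, each object moves in only one direction: if object o_i starts at agent i in σ_0 and ends at agent j in σ_t, then exactly |j - i| swaps involve o_i, and in all of them o_i moves rightward if i < j and leftward if i > j. -/
/-!
Along a sequence of rational swaps each agent's utility for the object it holds never decreases,
and it increases strictly when the agent gives its object away; so an object never comes back to
an agent it has left. On a path the position of an object is a walk on `ℤ` with steps in
`{-1, 0, 1}`, and such a walk that never revisits a vertex it left is monotone: after its latest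
move, by `d`, it stands where that move ended, so a move by `-d` would return to the vertex the
latest move left. A monotone unit-step walk from `i` to `j` makes exactly `|j - i|` moves.
-/

section SwapDynamics

variable {n : ℕ} {adj : Fin n → Fin n → Prop} {u : Fin n → Fin n → ℕ}

theorem SwapStep.utility_le {σ σ' : Assignment n} (h : SwapStep adj u σ σ') (q : Fin n) :
    u q (σ q) ≤ u q (σ' q) := by
  obtain ⟨a, b, -, ha, hb, rfl⟩ := h
  rcases eq_or_ne q a with rfl | hqa
  · simpa using ha.le
  rcases eq_or_ne q b with rfl | hqb
  · simpa using hb.le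
  · simp [Equiv.swap_apply_of_ne_of_ne hqa hqb]

theorem SwapStep.adj_and_utility_lt_of_inv_apply_ne {σ σ' : Assignment n}
    (h : SwapStep adj u σ σ') {o : Fin n} (ho : σ'⁻¹ o ≠ σ⁻¹ o) :
    (adj (σ⁻¹ o) (σ'⁻¹ o) ∨ adj (σ'⁻¹ o) (σ⁻¹ o)) ∧ u (σ⁻¹ o) o < u (σ⁻¹ o) (σ' (σ⁻¹ o)) := by
  obtain ⟨a, b, hab, ha, hb, rfl⟩ := h
  have hinv : (σ * Equiv.swap a b)⁻¹ o = Equiv.swap a b (σ⁻¹ o) := by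
    rw [mul_inv_rev, Equiv.swap_inv]; rfl
  have hσ : σ (σ⁻¹ o) = o := σ.apply_symm_apply o
  rw [hinv] at ho ⊢
  rcases eq_or_ne (σ⁻¹ o) a with hpa | hpa
  · rw [hpa] at hσ ⊢
    simpa [hσ] using And.intro (Or.inl hab) ha
  rcases eq_or_ne (σ⁻¹ o) b with hpb | hpb
  · rw [hpb] at hσ ⊢
    simpa [hσ] using And.intro (Or.inr hab) hb
  · exact absurd (Equiv.swap_apply_of_ne_of_ne hpa hpb) ho

variable {σseq : ℕ → Assignment n} {t : ℕ}

theorem SwapSeq.utility_mono (h : SwapSeq adj u σseq t) (q : Fin n) {m k : ℕ} (hmk : m ≤ k)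
    (hkt : k ≤ t) : u q (σseq m q) ≤ u q (σseq k q) := by
  induction k, hmk using Nat.le_induction with
  | base => exact le_rfl
  | succ k _ ih => exact (ih (by omega)).trans ((h k (by omega)).utility_le q)

theorem SwapSeq.inv_apply_ne_of_left (h : SwapSeq adj u σseq t) {o : Fin n} {m k : ℕ}
    (hm : m < t) (hleft : (σseq (m + 1))⁻¹ o ≠ (σseq m)⁻¹ o) (hmk : m < k) (hkt : k ≤ t) :
    (σseq k)⁻¹ o ≠ (σseq m)⁻¹ o := by
  intro hback
  have hgain := ((h m hm).adj_and_utility_lt_of_inv_apply_ne hleft).2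
  have hheld : σseq k ((σseq m)⁻¹ o) = o := by rw [← hback]; exact (σseq k).apply_symm_apply o
  have hmono := h.utility_mono ((σseq m)⁻¹ o) (by omega : m + 1 ≤ k) hkt
  rw [hheld] at hmono
  omega

end SwapDynamics

section Walk

variable {f : ℕ → ℤ} {t : ℕ}

theorem eq_add_mul_card_of_forall_eq_or_eq_add {d : ℤ}
    (h : ∀ m < t, f (m + 1) = f m ∨ f (m + 1) = f m + d) :
    f t = f 0 + d * ((Finset.range t).filter (fun m => f (m + 1) ≠ f m)).card := by
  induction t with
  | zero => simp
  | succ t ih =>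
    have ih := ih fun m hm => h m (by omega)
    rw [Finset.range_add_one, Finset.filter_insert]
    by_cases hmove : f (t + 1) = f t
    · rw [if_neg (not_not.mpr hmove), hmove, ih]
    · rw [if_pos hmove, Finset.card_insert_of_notMem (by simp), (h t (by omega)).resolve_left hmove,
        ih]
      push_cast
      ring

theorem step_eq_or_eq_add_of_no_return
    (hstep : ∀ m < t, |f (m + 1) - f m| ≤ 1)
    (hleave : ∀ m < t, f (m + 1) ≠ f m → ∀ k, m < k → k ≤ t → f k ≠ f m)
    {l k : ℕ} (hlk : l < k) (hkt : k < t) (hl : f (l + 1) ≠ f l) (hlk' : f (l + 1) = f k) :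
    f (k + 1) = f k ∨ f (k + 1) = f k + (f (l + 1) - f l) := by
  have hl' := abs_le.mp (hstep l (by omega))
  have hk' := abs_le.mp (hstep k hkt)
  have := hleave l (by omega) hl (k + 1) (by omega) (by omega)
  omega

theorem exists_forall_eq_or_eq_add_of_no_return
    (hstep : ∀ m < t, |f (m + 1) - f m| ≤ 1)
    (hleave : ∀ m < t, f (m + 1) ≠ f m → ∀ k, m < k → k ≤ t → f k ≠ f m) :
    ∃ d : ℤ, (d = 1 ∨ d = -1) ∧ ∀ m < t, f (m + 1) = f m ∨ f (m + 1) = f m + d := by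
  by_cases hmoves : ∃ m, m < t ∧ f (m + 1) ≠ f m
  swap
  · push Not at hmoves
    exact ⟨1, Or.inl rfl, fun m hm => Or.inl (hmoves m hm)⟩
  set m₀ := Nat.find hmoves
  obtain ⟨hm₀t, hm₀⟩ : m₀ < t ∧ f (m₀ + 1) ≠ f m₀ := Nat.find_spec hmoves
  set d := f (m₀ + 1) - f m₀
  have hd : d = 1 ∨ d = -1 := by
    have := abs_le.mp (hstep m₀ hm₀t)
    omega
  have hlast : ∀ k, m₀ < k → k ≤ t →
      ∃ l < k, f (l + 1) ≠ f l ∧ f (l + 1) - f l = d ∧ f (l + 1) = f k := by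
    intro k hk
    induction k, hk using Nat.le_induction with
    | base => exact fun _ => ⟨m₀, by omega, hm₀, rfl, rfl⟩
    | succ k hk ih =>
      intro hkt
      obtain ⟨l, hlk, hl, hld, hlf⟩ := ih (by omega)
      rcases step_eq_or_eq_add_of_no_return hstep hleave hlk (by omega) hl hlf with hk' | hk'
      · exact ⟨l, by omega, hl, hld, hlf.trans hk'.symm⟩
      · exact ⟨k, by omega, by omega, by omega, rfl⟩
  refine ⟨d, hd, fun m hm => ?_⟩
  rcases lt_trichotomy m m₀ with hlt | rfl | hgt
  · exact Or.inl (not_not.mp fun hne => Nat.find_min hmoves hlt ⟨hm, hne⟩)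
  · exact Or.inr (by omega)
  · obtain ⟨l, hlm, hl, hld, hlf⟩ := hlast m hgt hm.le
    simpa [hld] using step_eq_or_eq_add_of_no_return hstep hleave hlm hm hl hlf

end Walk

theorem object_moves_one_direction_general {n : ℕ}
    (u : Fin n → Fin n → ℕ)
    (t : ℕ) (σseq : ℕ → Assignment n) (h0 : σseq 0 = 1)
    (hseq : SwapSeq pathAdj u σseq t)
    (i j : Fin n) (hend : (σseq t)⁻¹ i = j) :
    -- `pos m` is the agent holding object `o_i` after `m` swaps
    let pos : ℕ → ℕ := fun m => (((σseq m)⁻¹) i).val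
    ((Finset.range t).filter (fun m => pos (m + 1) ≠ pos m)).card
        = (if i.val ≤ j.val then j.val - i.val else i.val - j.val) ∧
    (i.val < j.val → ∀ m < t, pos (m + 1) = pos m ∨ pos (m + 1) = pos m + 1) ∧
    (j.val < i.val → ∀ m < t, pos (m + 1) = pos m ∨ pos (m + 1) + 1 = pos m) := by
  intro pos
  have hstep : ∀ m < t, |(pos (m + 1) : ℤ) - pos m| ≤ 1 := by
    intro m hm
    by_cases hmove : (σseq (m + 1))⁻¹ i = (σseq m)⁻¹ i
    · have hstay : pos (m + 1) = pos m := by simp only [pos, hmove]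
      simp [hstay]
    · have hadj := ((hseq m hm).adj_and_utility_lt_of_inv_apply_ne hmove).1
      simp only [pathAdj] at hadj
      simp only [pos]
      exact abs_le.mpr ⟨by omega, by omega⟩
  have hleave : ∀ m < t, (pos (m + 1) : ℤ) ≠ pos m →
      ∀ k, m < k → k ≤ t → (pos k : ℤ) ≠ pos m := by
    intro m hm hmove k hmk hkt hback
    refine hseq.inv_apply_ne_of_left (o := i) hm (fun h => hmove ?_) hmk hkt (Fin.ext ?_)
    · simp only [pos, h]
    · exact_mod_cast hback
  obtain ⟨d, hd, hdir⟩ := exists_forall_eq_or_eq_add_of_no_return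
    (f := fun m => (pos m : ℤ)) hstep hleave
  have hcount := eq_add_mul_card_of_forall_eq_or_eq_add
    (f := fun m => (pos m : ℤ)) hdir
  simp only [ne_eq, Nat.cast_inj] at hcount ⊢
  have hpos0 : pos 0 = i.val := by simp only [pos, h0, inv_one, Equiv.Perm.coe_one, id]
  have hpost : pos t = j.val := by simp only [pos, hend]
  rcases hd with rfl | rfl
  · exact ⟨by split_ifs <;> omega, fun _ m hm => by have := hdir m hm; omega, fun _ => by omega⟩
  · exact ⟨by split_ifs <;> omega, fun _ => by omega, fun _ m hm => by have := hdir m hm; omega⟩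

/-- on a path with the identity initial endowment, if object `o_i` ends at agent
`j`, then exactly `|j - i|` swaps involve `o_i` (a swap involves `o_i` exactly when the position
of `o_i` changes), and in all of them `o_i` moves rightward if `i < j` and leftward if `i > j`. -/
theorem object_moves_one_direction {n : ℕ}
    (u : Fin n → Fin n → ℕ) (hu : StrictPref u)
    (t : ℕ) (σseq : ℕ → Assignment n) (h0 : σseq 0 = 1)
    (hseq : SwapSeq pathAdj u σseq t)
    (i j : Fin n) (hend : (σseq t)⁻¹ i = j) :
    -- `pos m` is the agent holding object `o_i` after `m` swaps
    let pos : ℕ → ℕ := fun m => (((σseq m)⁻¹) i).val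
    ((Finset.range t).filter (fun m => pos (m + 1) ≠ pos m)).card
        = (if i.val ≤ j.val then j.val - i.val else i.val - j.val) ∧
    (i.val < j.val → ∀ m < t, pos (m + 1) = pos m ∨ pos (m + 1) = pos m + 1) ∧
    (j.val < i.val → ∀ m < t, pos (m + 1) = pos m ∨ pos (m + 1) + 1 = pos m) :=
  object_moves_one_direction_general u t σseq h0 hseq i j hend
end

section
/- When the network is a path, for a sequence of rational swaps under strict preferences and objects o_a, o_b with a < b, letting a' and b' be the final positions of o_a and o_b respectively: if a' ≤ a or b' ≥ b, then a' < b'. (I.e., if o_a moves weakly leftward or o_b moves weakly rightward, their relative order is preserved.) -/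
/-!
An agent only ever trades up, so under strict preferences it never holds the same object at
two times without holding it in between. Read for a single object, this says: once agent `c`
hands `o` to its right neighbour `c + 1`, the object never comes back to `c`, and before that
moment it had never been at `c + 1`. Since objects move by at most one place per swap, `o` is
then confined to the left of `c + 1` before the hand-over and to the right of `c` after it.
The objects `o_a` and `o_b` can only change their order by being swapped with each other, at
which moment `o_a` goes right from some `c` and `o_b` goes left from `c + 1`; hence
`a ≤ c < a'` and `b' ≤ c < b`, which is excluded by `a' ≤ a` as well as by `b ≤ b'`.
-/

open Equiv

def NoReturn {α : Type*} (f : ℕ → α) (t : ℕ) : Prop :=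
  ∀ ⦃m m' m''⦄, m ≤ m' → m' ≤ m'' → m'' ≤ t → f m'' = f m → f m' = f m

namespace NoReturn

variable {α β : Type*} {f : ℕ → α} {t : ℕ}

lemma comp (hf : NoReturn f t) {g : α → β} (hg : Function.Injective g) :
    NoReturn (g ∘ f) t :=
  fun _ _ _ h₁ h₂ h₃ he => congrArg g (hf h₁ h₂ h₃ (hg he))

end NoReturn

lemma Nat.exists_lt_and_not_succ {P : ℕ → Prop} (h₀ : P 0) {t : ℕ} (ht : ¬ P t) :
    ∃ m < t, P m ∧ ¬ P (m + 1) := by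
  induction t with
  | zero => exact absurd h₀ ht
  | succ t ih =>
    by_cases hPt : P t
    · exact ⟨t, t.lt_succ_self, hPt, ht⟩
    · obtain ⟨m, hm, hPm⟩ := ih hPt
      exact ⟨m, hm.trans t.lt_succ_self, hPm⟩

lemma Int.exists_eq_of_forall_sub_one_le {f : ℕ → ℤ} {i j : ℕ} {q : ℤ} (hij : i ≤ j)
    (hstep : ∀ k, i ≤ k → k < j → f k - 1 ≤ f (k + 1)) (hj : f j ≤ q) (hi : q ≤ f i) :
    ∃ k, i ≤ k ∧ k ≤ j ∧ f k = q := by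
  induction j, hij using Nat.le_induction with
  | base => exact ⟨i, le_rfl, le_rfl, le_antisymm hj hi⟩
  | succ j hij ih =>
    by_cases hfj : f j ≤ q
    · obtain ⟨k, hik, hkj, hk⟩ := ih (fun k h₁ h₂ => hstep k h₁ (by omega)) hfj
      exact ⟨k, hik, by omega, hk⟩
    · have := hstep j hij j.lt_succ_self
      exact ⟨j + 1, by omega, le_rfl, by omega⟩

section Trajectory

variable {f : ℕ → ℤ} {t s : ℕ}

lemma NoReturn.le_and_lt_of_step_up (hf : NoReturn f t)
    (hstep : ∀ k < t, |f (k + 1) - f k| ≤ 1) (hs : s < t) (hup : f (s + 1) = f s + 1) :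
    f 0 ≤ f s ∧ f s < f t := by
  have hdown : ∀ k, k < t → f k - 1 ≤ f (k + 1) := fun k hk => by
    have := (abs_le.mp (hstep k hk)).1; omega
  constructor
  · by_contra! hlt
    -- `f` would take the value `f s + 1` at some `k ≤ s` and again at `s + 1`, but not at `s`
    obtain ⟨k, -, hks, hk⟩ := Int.exists_eq_of_forall_sub_one_le (f := f) (q := f s + 1)
      (Nat.zero_le s) (fun k _ hk => hdown k (by omega)) (by omega) (by omega)
    have := hf hks (by omega : s ≤ s + 1) hs (hup.trans hk.symm)
    omega
  · by_contra! hle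
    -- `f` would come back to the value `f s` after leaving it at time `s + 1`
    obtain ⟨k, hsk, hkt, hk⟩ := Int.exists_eq_of_forall_sub_one_le (f := f) (q := f s)
      (by omega : s + 1 ≤ t) (fun k _ hk => hdown k hk) hle (by omega)
    have := hf (by omega : s ≤ s + 1) hsk hkt hk
    omega

lemma NoReturn.le_and_lt_of_step_down (hf : NoReturn f t)
    (hstep : ∀ k < t, |f (k + 1) - f k| ≤ 1) (hs : s < t) (hdown : f (s + 1) + 1 = f s) :
    f s ≤ f 0 ∧ f t < f s := by
  have := (hf.comp neg_injective).le_and_lt_of_step_up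
    (fun k hk => by simpa [abs_sub_comm, neg_add_eq_sub] using hstep k hk) hs
    (by simp only [Function.comp_apply]; omega)
  simp only [Function.comp_apply, neg_le_neg_iff, neg_lt_neg_iff] at this
  exact this

end Trajectory

lemma pathAdj.abs_swap_sub_le_one {n : ℕ} {c d : Fin n} (hcd : pathAdj c d) (p : Fin n) :
    |((swap c d p : ℕ) : ℤ) - p| ≤ 1 := by
  unfold pathAdj at hcd
  rw [swap_apply_def]
  split_ifs with hc hd
  · subst hc; rw [abs_le]; omega
  · subst hd; rw [abs_le]; omega
  · simp

namespace SwapStep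

variable {n : ℕ} {adj : Fin n → Fin n → Prop} {u : Fin n → Fin n → ℕ}
  {σ σ' : Assignment n}

lemma exists_inv_apply_eq_swap (hs : SwapStep adj u σ σ') :
    ∃ c d, adj c d ∧ ∀ o, σ'⁻¹ o = swap c d (σ⁻¹ o) := by
  obtain ⟨c, d, hcd, -, -, rfl⟩ := hs
  exact ⟨c, d, hcd, fun o => by rw [mul_inv_rev, swap_inv, Perm.mul_apply]⟩

lemma utility_le_s3 (hs : SwapStep adj u σ σ') (j : Fin n) : u j (σ j) ≤ u j (σ' j) := by
  obtain ⟨c, d, -, hc, hd, rfl⟩ := hs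
  rw [Perm.mul_apply, swap_apply_def]
  split_ifs with hjc hjd
  · exact hjc ▸ hc.le
  · exact hjd ▸ hd.le
  · exact le_rfl

end SwapStep

namespace SwapSeq

variable {n : ℕ} {adj : Fin n → Fin n → Prop} {u : Fin n → Fin n → ℕ}
  {σseq : ℕ → Assignment n} {t : ℕ}

lemma utility_monotoneOn (hseq : SwapSeq adj u σseq t) (j : Fin n) :
    MonotoneOn (fun m => u j (σseq m j)) (Set.Iic t) :=
  monotoneOn_of_le_add_one Set.ordConnected_Iic fun m _ _ hm =>
    (hseq m (Set.mem_Iic.mp hm)).utility_le_s3 j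

lemma noReturn_inv_apply (hu : StrictPref u) (hseq : SwapSeq adj u σseq t) (o : Fin n) :
    NoReturn (fun m => (σseq m)⁻¹ o) t := by
  intro m m' m'' h₁ h₂ h₃ he
  set j := (σseq m)⁻¹ o
  have hm : σseq m j = o := (Perm.inv_eq_iff_eq.mp rfl).symm
  have hm'' : σseq m'' j = o := (Perm.inv_eq_iff_eq.mp he).symm
  have hmono := hseq.utility_monotoneOn j
  have hm' : σseq m' j = o := hu j <| le_antisymm
    (hm'' ▸ hmono (Set.mem_Iic.mpr (h₂.trans h₃)) (Set.mem_Iic.mpr h₃) h₂)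
    (hm ▸ hmono (Set.mem_Iic.mpr (h₁.trans (h₂.trans h₃)))
      (Set.mem_Iic.mpr (h₂.trans h₃)) h₁)
  exact Perm.inv_eq_iff_eq.mpr hm'.symm

lemma abs_inv_apply_succ_sub_le_one (hseq : SwapSeq pathAdj u σseq t) (o : Fin n) :
    ∀ k < t, |(((σseq (k + 1))⁻¹ o : ℕ) : ℤ) - ((σseq k)⁻¹ o : ℕ)| ≤ 1 := by
  intro k hk
  obtain ⟨c, d, hcd, hswap⟩ := (hseq k hk).exists_inv_apply_eq_swap
  rw [hswap]
  exact hcd.abs_swap_sub_le_one _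

end SwapSeq

/-- on a path, for objects `o_a` and `o_b` with `a < b` and final positions
`a' = σ_t⁻¹(o_a)`, `b' = σ_t⁻¹(o_b)`: if `a' ≤ a` or `b' ≥ b` then `a' < b'`. -/
theorem relative_order_preserved {n : ℕ}
    (u : Fin n → Fin n → ℕ) (hu : StrictPref u)
    (t : ℕ) (σseq : ℕ → Assignment n) (h0 : σseq 0 = 1)
    (hseq : SwapSeq pathAdj u σseq t)
    (a b : Fin n) (hab : a.val < b.val)
    (h : (((σseq t)⁻¹) a).val ≤ a.val ∨ b.val ≤ (((σseq t)⁻¹) b).val) :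
    (((σseq t)⁻¹) a).val < (((σseq t)⁻¹) b).val := by
  set pos : Fin n → ℕ → ℤ := fun o m => (((σseq m)⁻¹ o : ℕ) : ℤ)
  have hret (o : Fin n) : NoReturn (pos o) t :=
    (hseq.noReturn_inv_apply hu o).comp (Nat.cast_injective.comp Fin.val_injective)
  have hstep := hseq.abs_inv_apply_succ_sub_le_one
  have hpos0 (o : Fin n) : pos o 0 = o := by simp only [pos, h0]; rfl
  have hdistinct (m : ℕ) : pos a m ≠ pos b m := by
    simpa [pos, Fin.val_inj] using Fin.ne_of_val_ne hab.ne
  have hinit : pos a 0 < pos b 0 := by simpa [hpos0] using hab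
  by_contra! hflip
  have hfinal : ¬ pos a t < pos b t := by simp only [pos]; omega
  obtain ⟨m, hmt, hlt, hnlt⟩ := Nat.exists_lt_and_not_succ (P := fun m => pos a m < pos b m)
    hinit hfinal
  -- the order can only flip when `o_a` and `o_b` are swapped with each other
  have hcross : pos a (m + 1) = pos a m + 1 ∧ pos b (m + 1) + 1 = pos b m := by
    have := abs_le.mp (hstep a m hmt)
    have := abs_le.mp (hstep b m hmt)
    have := hdistinct (m + 1)
    simp only [pos] at *
    omega
  rcases h with ha | hb
  · have := (hret a).le_and_lt_of_step_up (hstep a) hmt hcross.1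
    simp only [hpos0, pos] at this
    omega
  · have := (hret b).le_and_lt_of_step_down (hstep b) hmt hcross.2
    simp only [hpos0, pos] at this
    omega
end

section
/- On a path, in any sequence of rational swaps under strict preferences, if objects o_a and o_b with a < b both end strictly to the right of their initial positions (a' > a and b' > b) and the interval Q = [a, a'] ∩ [b, b'] is nonempty, then every agent q in Q strictly prefers o_a to o_b. -/
/-!
An agent's utility for the object it holds never decreases along a sequence of rational swaps,
and on a path an object that moves right enters each agent `q` for the first time from `q - 1`.
Induct on `q` in `[b, min a' b']`. Agent `b` starts with `o_b` and later receives `o_a`. For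
`q > b`, if `q` preferred `o_b`, then `o_a` reached `q` before `o_b` did, so agent `q - 1` held
`o_a` before `o_b` and prefers `o_b`, against the induction hypothesis.
-/

theorem exists_eq_add_one_of_le_add_one {f : ℕ → ℕ} {t k : ℕ}
    (hf : ∀ m < t, f (m + 1) ≤ f m + 1) (h0 : f 0 < k) (ht : k ≤ f t) :
    ∃ s < t, f s + 1 = k ∧ f (s + 1) = k := by
  induction t with
  | zero => omega
  | succ t ih =>
    by_cases hk : k ≤ f t
    · obtain ⟨s, hs, hfs⟩ := ih (fun m hm => hf m (by omega)) hk
      exact ⟨s, by omega, hfs⟩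
    · have := hf t t.lt_succ_self
      exact ⟨t, t.lt_succ_self, by omega, by omega⟩

namespace SwapSeq

variable {n : ℕ} {adj : Fin n → Fin n → Prop} {u : Fin n → Fin n → ℕ} {σseq : ℕ → Assignment n}
  {t : ℕ}

theorem utility_le_succ (hseq : SwapSeq adj u σseq t) (z : Fin n) {m : ℕ} (hm : m < t) :
    u z (σseq m z) ≤ u z (σseq (m + 1) z) := by
  obtain ⟨x, y, -, hx, hy, hstep⟩ := hseq m hm
  rw [hstep, Equiv.Perm.mul_apply, Equiv.swap_apply_def]
  split_ifs with hzx hzy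
  · exact hzx ▸ hx.le
  · exact hzy ▸ hy.le
  · rfl

theorem utility_mono_s4 (hseq : SwapSeq adj u σseq t) (z : Fin n) {m m' : ℕ} (hm : m ≤ m')
    (hm' : m' ≤ t) : u z (σseq m z) ≤ u z (σseq m' z) := by
  induction m', hm using Nat.le_induction with
  | base => rfl
  | succ k _ ih => exact (ih (by omega)).trans (hseq.utility_le_succ z (by omega))

theorem utility_lt_of_lt (hu : StrictPref u) (hseq : SwapSeq adj u σseq t) (z : Fin n)
    {m m' : ℕ} (hm : m < m') (hm' : m' ≤ t) {o o' : Fin n} (ho : σseq m z = o)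
    (ho' : σseq m' z = o') (hne : o ≠ o') : u z o < u z o' := by
  subst ho ho'
  exact (hseq.utility_mono_s4 z hm.le hm').lt_of_ne fun h => hne (hu z h)

theorem inv_apply_succ_le (hseq : SwapSeq pathAdj u σseq t) (o : Fin n) {m : ℕ} (hm : m < t) :
    ((σseq (m + 1))⁻¹ o).val ≤ ((σseq m)⁻¹ o).val + 1 := by
  obtain ⟨x, y, hxy, -, -, hstep⟩ := hseq m hm
  rw [hstep, mul_inv_rev, Equiv.swap_inv, Equiv.Perm.mul_apply, Equiv.swap_apply_def]
  unfold pathAdj at hxy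
  split_ifs with hx hy
  · rw [hx]; omega
  · rw [hy]; omega
  · omega

theorem exists_arrival (hseq : SwapSeq pathAdj u σseq t) (o q : Fin n)
    (h0 : (σseq 0)⁻¹ o < q) (ht : q ≤ (σseq t)⁻¹ o) :
    ∃ s < t, σseq (s + 1) q = o ∧ ((σseq s)⁻¹ o).val + 1 = q.val := by
  obtain ⟨s, hs, hprev, hnext⟩ := exists_eq_add_one_of_le_add_one
    (f := fun m => ((σseq m)⁻¹ o).val) (fun m hm => hseq.inv_apply_succ_le o hm) h0 ht
  refine ⟨s, hs, ?_, hprev⟩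
  rw [eq_comm, ← Equiv.Perm.inv_eq_iff_eq]
  exact Fin.ext hnext

theorem utility_lt_of_moved_right (hu : StrictPref u) (hseq : SwapSeq pathAdj u σseq t)
    (h0 : σseq 0 = 1) {a b : Fin n} (hab : a < b) (q : Fin n) (hbq : b ≤ q)
    (hqa : q ≤ (σseq t)⁻¹ a) (hqb : q ≤ (σseq t)⁻¹ b) : u q b < u q a := by
  induction q using WellFoundedLT.induction with
  | _ q ih =>
  have hinit : ∀ o, (σseq 0)⁻¹ o = o := by simp [h0]
  obtain ⟨s₁, hs₁, hq_a, hp_a⟩ :=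
    hseq.exists_arrival a q (by rw [hinit]; exact hab.trans_le hbq) hqa
  by_contra! hle
  rcases hbq.eq_or_lt with rfl | hbq
  · exact hle.not_gt <| hseq.utility_lt_of_lt hu b s₁.succ_pos hs₁ (by simp [h0]) hq_a hab.ne'
  obtain ⟨s₂, hs₂, hq_b, hp_b⟩ := hseq.exists_arrival b q (by rw [hinit]; exact hbq) hqb
  have hs : s₁ < s₂ := by
    rcases lt_trichotomy s₁ s₂ with h | rfl | h
    · exact h
    · exact absurd (hq_a.symm.trans hq_b) hab.ne
    · exact absurd (hseq.utility_lt_of_lt hu q (by omega) hs₁ hq_b hq_a hab.ne') hle.not_gt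
  set p := (σseq s₁)⁻¹ a
  have hp : (σseq s₂)⁻¹ b = p := Fin.ext (by omega)
  have hp_lt : u p a < u p b :=
    hseq.utility_lt_of_lt hu p hs hs₂.le (by simp [p]) (by rw [← hp]; simp) hab.ne
  exact hp_lt.not_gt <| ih p (Fin.lt_def.2 (by omega)) (Fin.le_def.2 (by omega))
    (hqa.trans' (Fin.le_def.2 (by omega))) (hqb.trans' (Fin.le_def.2 (by omega)))

end SwapSeq

theorem intersect_both_right_general {n : ℕ}
    (u : Fin n → Fin n → ℕ) (hu : StrictPref u)
    (t : ℕ) (σseq : ℕ → Assignment n) (h0 : σseq 0 = 1)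
    (hseq : SwapSeq pathAdj u σseq t)
    (a b : Fin n) (hab : a.val < b.val) :
    ∀ q : Fin n,
      q.val ∈ Set.Icc a.val (((σseq t)⁻¹) a).val ∩ Set.Icc b.val (((σseq t)⁻¹) b).val →
      u q a > u q b := by
  rintro q ⟨⟨-, hqa⟩, hbq, hqb⟩
  exact hseq.utility_lt_of_moved_right hu h0 hab q hbq hqa hqb

/-- on a path, if `a < b`, both objects end strictly to the right of their
initial positions (`a' > a`, `b' > b`), and `Q = [a,a'] ∩ [b,b']` is nonempty, then every
agent `q ∈ Q` strictly prefers `o_a` to `o_b`. -/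
theorem intersect_both_right {n : ℕ}
    (u : Fin n → Fin n → ℕ) (hu : StrictPref u)
    (t : ℕ) (σseq : ℕ → Assignment n) (h0 : σseq 0 = 1)
    (hseq : SwapSeq pathAdj u σseq t)
    (a b : Fin n) (hab : a.val < b.val)
    (ha : a.val < (((σseq t)⁻¹) a).val) (hb : b.val < (((σseq t)⁻¹) b).val)
    (hQ : (Set.Icc a.val (((σseq t)⁻¹) a).val ∩
            Set.Icc b.val (((σseq t)⁻¹) b).val).Nonempty) :
    ∀ q : Fin n,
      q.val ∈ Set.Icc a.val (((σseq t)⁻¹) a).val ∩ Set.Icc b.val (((σseq t)⁻¹) b).val →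
      u q a > u q b :=
  intersect_both_right_general u hu t σseq h0 hseq a b hab
end

section
/- On a path with n' agents, for a sequence of rational swaps whose final assignment σ_t satisfies σ_t^T(o_1) = k and σ_t^T(o_{n'}) = k-1, and for objects o_a, o_b with a < b, a' > a, b' < b, and intersecting trajectories, setting c = a' + b' - k + 1: every agent q with max(a,b') ≤ q < c strictly prefers o_b to o_a, and every agent q with c ≤ q ≤ min(a',b) strictly prefers o_a to o_b. -/
/-!
Two objects cross at most once: an object moving back across a crossing point would return to an
agent who has already traded it away, while agents only trade up. The object starting at the right
end only moves left, and whoever overtakes it at position `p` ends exactly at `p`; it follows that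
objects ending right of its final position `k - 1` never cross one another, and, in the mirror,
neither do objects ending left of the final position `k` of the object starting at the left end.
So when `o_a` overtakes `o_b`, the objects to its left are exactly those ending left of `b'` or in
`[k, a')`, and the crossing happens between the agents `c - 1` and `c`. An agent `q < c` in the
given range meets `o_a` on its way there and `o_b` on its way back, an agent `q ≥ c` the other way
round.
-/

theorem Nat.exists_and_not_succ_of_le {P : ℕ → Prop} {a b : ℕ} (hab : a ≤ b) (ha : P a)
    (hb : ¬P b) : ∃ m, a ≤ m ∧ m < b ∧ P m ∧ ¬P (m + 1) := by
  induction b, hab using Nat.le_induction with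
  | base => exact absurd ha hb
  | succ b hab ih =>
    by_cases h : P b
    · exact ⟨b, hab, b.lt_succ_self, h, hb⟩
    · obtain ⟨m, ham, hmb, hm⟩ := ih h
      exact ⟨m, ham, hmb.trans b.lt_succ_self, hm⟩

theorem Nat.exists_eq_of_mem_uIcc {f : ℕ → ℕ} {a b q : ℕ} (hab : a ≤ b)
    (hf : ∀ m, a ≤ m → m < b → f (m + 1) ≤ f m + 1 ∧ f m ≤ f (m + 1) + 1)
    (hq : q ∈ Set.uIcc (f a) (f b)) : ∃ m, a ≤ m ∧ m ≤ b ∧ f m = q := by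
  by_cases hqa : f a = q
  · exact ⟨a, le_rfl, hab, hqa⟩
  rcases Set.mem_uIcc.1 hq with ⟨h₁, h₂⟩ | ⟨h₁, h₂⟩
  · obtain ⟨m, ham, hmb, hm, hm1⟩ := Nat.exists_and_not_succ_of_le (P := (f · < q)) hab (by omega)
      (by omega)
    have := hf m ham hmb
    exact ⟨m + 1, by omega, hmb, by omega⟩
  · obtain ⟨m, ham, hmb, hm, hm1⟩ := Nat.exists_and_not_succ_of_le (P := (q < f ·)) hab (by omega)
      (by omega)
    have := hf m ham hmb
    exact ⟨m + 1, by omega, hmb, by omega⟩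

structure SwapRun (n : ℕ) where
  u : Fin n → Fin n → ℕ
  t : ℕ
  σ : ℕ → Assignment n
  strictPref : StrictPref u
  swapSeq : SwapSeq pathAdj u σ t
  σ_zero : σ 0 = 1

namespace SwapRun

variable {n : ℕ} (S : SwapRun n) {m r r₁ r₂ r₃ r₄ s : ℕ} {x y z : Fin n}

def pos (r : ℕ) (x : Fin n) : ℕ := ((S.σ r)⁻¹ x : Fin n)

theorem pos_lt (r : ℕ) (x : Fin n) : S.pos r x < n := ((S.σ r)⁻¹ x).isLt

theorem pos_zero (x : Fin n) : S.pos 0 x = x := by simp [pos, S.σ_zero]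

theorem pos_inj : S.pos r x = S.pos r y ↔ x = y := by
  simp [pos, Fin.val_inj]

theorem pos_eq_iff {q : Fin n} : S.pos r x = q ↔ S.σ r q = x := by
  rw [pos, Fin.val_inj, Equiv.Perm.inv_eq_iff_eq, eq_comm]

theorem exists_pos_eq (r : ℕ) {p : ℕ} (hp : p < n) : ∃ x, S.pos r x = p :=
  ⟨S.σ r ⟨p, hp⟩, (S.pos_eq_iff (q := ⟨p, hp⟩)).2 rfl⟩

theorem exists_swap_pos (hm : m < S.t) : ∃ p, ∀ x,
    (S.pos m x = p ∧ S.pos (m + 1) x = p + 1) ∨ (S.pos m x = p + 1 ∧ S.pos (m + 1) x = p) ∨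
      (S.pos m x ≠ p ∧ S.pos m x ≠ p + 1 ∧ S.pos (m + 1) x = S.pos m x) := by
  obtain ⟨i, j, hij, -, -, hσ⟩ := S.swapSeq m hm
  wlog hlt : i.val + 1 = j.val generalizing i j
  · exact this j i hij.symm (by rw [hσ, Equiv.swap_comm]) (hij.resolve_left hlt)
  refine ⟨i, fun x => ?_⟩
  have hx : (S.σ (m + 1))⁻¹ x = Equiv.swap i j ((S.σ m)⁻¹ x) := by
    rw [hσ, mul_inv_rev, Equiv.swap_inv, Equiv.Perm.mul_apply]
  simp only [pos, hx]
  rcases eq_or_ne ((S.σ m)⁻¹ x) i with h | h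
  · rw [h, Equiv.swap_apply_left]; omega
  rcases eq_or_ne ((S.σ m)⁻¹ x) j with h' | h'
  · rw [h', Equiv.swap_apply_right]; omega
  · rw [Equiv.swap_apply_of_ne_of_ne h h']
    have := Fin.val_ne_of_ne h
    have := Fin.val_ne_of_ne h'
    omega

theorem pos_succ_le (hm : m < S.t) (x : Fin n) :
    S.pos (m + 1) x ≤ S.pos m x + 1 ∧ S.pos m x ≤ S.pos (m + 1) x + 1 := by
  obtain ⟨p, hp⟩ := S.exists_swap_pos hm
  have := hp x
  omega

theorem exists_pos_eq_of_mem_uIcc (h₁₂ : r₁ ≤ r₂) (h₂ : r₂ ≤ S.t) {p : ℕ}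
    (hp : p ∈ Set.uIcc (S.pos r₁ x) (S.pos r₂ x)) : ∃ r, r₁ ≤ r ∧ r ≤ r₂ ∧ S.pos r x = p :=
  Nat.exists_eq_of_mem_uIcc h₁₂ (fun _ _ hm => S.pos_succ_le (by omega) x) hp

theorem u_σ_le_of_le (q : Fin n) (h₁₂ : r₁ ≤ r₂) (h₂ : r₂ ≤ S.t) :
    S.u q (S.σ r₁ q) ≤ S.u q (S.σ r₂ q) := by
  induction r₂, h₁₂ using Nat.le_induction with
  | base => exact le_rfl
  | succ r hr ih =>
    refine (ih (by omega)).trans ?_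
    obtain ⟨i, j, -, hi, hj, hσ⟩ := S.swapSeq r (by omega)
    have hq : S.σ (r + 1) q = S.σ r (Equiv.swap i j q) := by rw [hσ]; rfl
    rw [hq]
    rcases eq_or_ne q i with rfl | h
    · rw [Equiv.swap_apply_left]; exact hi.le
    rcases eq_or_ne q j with rfl | h'
    · rw [Equiv.swap_apply_right]; exact hj.le
    · rw [Equiv.swap_apply_of_ne_of_ne h h']

theorem u_lt_of_pos_eq {q : Fin n} (h₁₂ : r₁ ≤ r₂) (h₂ : r₂ ≤ S.t) (hxy : x ≠ y)
    (hx : S.pos r₁ x = q) (hy : S.pos r₂ y = q) : S.u q x < S.u q y := by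
  have hle := S.u_σ_le_of_le q h₁₂ h₂
  rw [(S.pos_eq_iff).1 hx, (S.pos_eq_iff).1 hy] at hle
  exact hle.lt_of_ne fun h => hxy (S.strictPref q h)

theorem eq_of_pos_eq_of_pos_eq {p : ℕ} (h₁₂ : r₁ ≤ r₂) (h₂₃ : r₂ ≤ r₃) (h₃ : r₃ ≤ S.t)
    (hx₁ : S.pos r₁ x = p) (hy : S.pos r₂ y = p) (hx₃ : S.pos r₃ x = p) : x = y := by
  by_contra hxy
  have hp : p < n := hx₁ ▸ S.pos_lt r₁ x
  have := S.u_lt_of_pos_eq (q := ⟨p, hp⟩) h₁₂ (h₂₃.trans h₃) hxy hx₁ hy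
  have := S.u_lt_of_pos_eq (q := ⟨p, hp⟩) h₂₃ h₃ (Ne.symm hxy) hy hx₃
  omega

def Crosses (m : ℕ) (x y : Fin n) : Prop :=
  m < S.t ∧ S.pos m x < S.pos m y ∧ S.pos (m + 1) y < S.pos (m + 1) x

variable {S} in
theorem Crosses.pos_eq (h : S.Crosses m x y) :
    S.pos m y = S.pos m x + 1 ∧ S.pos (m + 1) x = S.pos m x + 1 ∧
      S.pos (m + 1) y = S.pos m x := by
  obtain ⟨hm, h₁, h₂⟩ := h
  obtain ⟨p, hp⟩ := S.exists_swap_pos hm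
  have := hp x
  have := hp y
  omega

variable {S} in
theorem Crosses.ne (h : S.Crosses m x y) : x ≠ y := by
  rintro rfl
  exact lt_irrefl _ h.2.1

variable {S} in
/-- An object moving back across the crossing point would return to an agent who has already
traded it away. -/
theorem Crosses.pos_le_and_lt_pos (h : S.Crosses m x y) (hmr : m < r) (hr : r ≤ S.t) :
    S.pos r y ≤ S.pos m x ∧ S.pos m x < S.pos r x := by
  obtain ⟨hy, hx₁, hy₁⟩ := h.pos_eq
  constructor
  · by_contra hlt
    obtain ⟨r', hr'₁, hr'₂, hr'⟩ := S.exists_pos_eq_of_mem_uIcc (r₁ := m + 1) (x := y)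
      (p := S.pos m x + 1) hmr hr (Set.mem_uIcc.2 (by omega))
    exact h.ne (S.eq_of_pos_eq_of_pos_eq (Nat.le_add_right m 1) hr'₁ (hr'₂.trans hr) hy hx₁
      hr').symm
  · by_contra hle
    obtain ⟨r', hr'₁, hr'₂, hr'⟩ := S.exists_pos_eq_of_mem_uIcc (r₁ := m + 1) (x := x)
      (p := S.pos m x) hmr hr (Set.mem_uIcc.2 (by omega))
    exact h.ne (S.eq_of_pos_eq_of_pos_eq (Nat.le_add_right m 1) hr'₁ (hr'₂.trans hr) rfl hy₁ hr')

variable {S} in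
theorem Crosses.pos_lt_of_lt (h : S.Crosses m x y) (hmr : m < r) (hr : r ≤ S.t) :
    S.pos r y < S.pos r x :=
  (h.pos_le_and_lt_pos hmr hr).1.trans_lt (h.pos_le_and_lt_pos hmr hr).2

theorem exists_crosses (h₁₂ : r₁ ≤ r₂) (h₂ : r₂ ≤ S.t) (h₁ : S.pos r₁ x < S.pos r₁ y)
    (h₂' : S.pos r₂ y < S.pos r₂ x) : ∃ m, r₁ ≤ m ∧ m < r₂ ∧ S.Crosses m x y := by
  obtain ⟨m, hm₁, hm₂, hm, hm'⟩ :=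
    Nat.exists_and_not_succ_of_le (P := fun r => S.pos r x < S.pos r y) h₁₂ h₁ (by omega)
  have hne : S.pos (m + 1) x ≠ S.pos (m + 1) y := fun h => by
    rw [S.pos_inj] at h; rw [h] at hm; exact lt_irrefl _ hm
  exact ⟨m, hm₁, hm₂, by omega, hm, by omega⟩

variable {S} in
theorem Crosses.pos_lt_of_le (h : S.Crosses m x y) (hrm : r ≤ m) : S.pos r x < S.pos r y := by
  by_contra hle
  have hlt : S.pos r y < S.pos r x :=
    lt_of_le_of_ne (not_lt.1 hle) fun e => h.ne ((S.pos_inj).1 e).symm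
  obtain ⟨m', -, hm', h'⟩ := S.exists_crosses hrm h.1.le hlt h.2.1
  exact lt_asymm h.2.2 (h'.pos_lt_of_lt (by omega) h.1)

variable {S} in
theorem Crosses.eq (h : S.Crosses m x y) (h' : S.Crosses r x y) : m = r := by
  by_contra hne
  rcases Nat.lt_or_gt_of_ne hne with hlt | hlt
  · exact lt_asymm (h.pos_lt_of_lt hlt h'.1.le) (h'.pos_lt_of_le le_rfl)
  · exact lt_asymm (h'.pos_lt_of_lt hlt h.1.le) (h.pos_lt_of_le le_rfl)

theorem exists_crosses_of_pos_ne (hm : m < S.t) (h : S.pos (m + 1) x ≠ S.pos m x) :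
    ∃ z, S.Crosses m x z ∨ S.Crosses m z x := by
  obtain ⟨p, hp⟩ := S.exists_swap_pos hm
  have hx := hp x
  obtain ⟨z, hz⟩ := S.exists_pos_eq m (p := S.pos (m + 1) x) (S.pos_lt _ x)
  have := hp z
  exact ⟨z, by unfold Crosses; omega⟩

theorem pos_lt_pos_iff_of_forall_not_crosses (hxy : ∀ m, ¬S.Crosses m x y)
    (hyx : ∀ m, ¬S.Crosses m y x) (hne : x ≠ y) (hr : r ≤ S.t) :
    S.pos r x < S.pos r y ↔ S.pos S.t x < S.pos S.t y := by
  have hne' : ∀ r, S.pos r x ≠ S.pos r y := fun r e => hne ((S.pos_inj).1 e)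
  constructor
  · intro h
    by_contra h'
    obtain ⟨m, -, -, hm⟩ := S.exists_crosses hr le_rfl h (by have := hne' S.t; omega)
    exact hxy m hm
  · intro h
    by_contra h'
    obtain ⟨m, -, -, hm⟩ := S.exists_crosses hr le_rfl (by have := hne' r; omega) h
    exact hyx m hm

theorem exists_crosses_of_pos_succ_lt (hm : m < S.t) (h : S.pos (m + 1) x < S.pos m x) :
    ∃ z, S.Crosses m z x := by
  obtain ⟨z, hz | hz⟩ := S.exists_crosses_of_pos_ne hm h.ne
  · have := hz.pos_eq
    omega
  · exact ⟨z, hz⟩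

section Wall

variable {w : Fin n}

theorem pos_zero_lt_of_isTop (hw : IsTop w) (hx : x ≠ w) : S.pos 0 x < S.pos 0 w := by
  simpa only [pos_zero, Fin.val_fin_lt] using lt_of_le_of_ne (hw x) hx

/-- Moving right, the rightmost object would overtake an object that must have been to its right
from the start. -/
theorem pos_succ_le_of_isTop (hw : IsTop w) (hm : m < S.t) : S.pos (m + 1) w ≤ S.pos m w := by
  by_contra hlt
  obtain ⟨z, hz | hz⟩ := S.exists_crosses_of_pos_ne hm (ne_of_not_le hlt)
  · have hzw : z ≠ w := fun e => hz.ne e.symm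
    exact lt_asymm (hz.pos_lt_of_le (Nat.zero_le m)) (S.pos_zero_lt_of_isTop hw hzw)
  · have := hz.pos_eq
    omega

theorem pos_le_pos_of_isTop (hw : IsTop w) (h₁₂ : r₁ ≤ r₂) (h₂ : r₂ ≤ S.t) :
    S.pos r₂ w ≤ S.pos r₁ w := by
  induction r₂, h₁₂ using Nat.le_induction with
  | base => exact le_rfl
  | succ r _ ih => exact (S.pos_succ_le_of_isTop hw (by omega)).trans (ih (by omega))

variable {S} in
/-- Downward induction on the position `p` of the rightmost object: the object overtaking it ends
at some `p' ≥ p`; if `p' > p`, by induction it is also the one that overtook it at `p'`, but two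
objects cross at most once. -/
theorem Crosses.pos_t_eq_of_isTop (hw : IsTop w) (h : S.Crosses m z w) :
    S.pos S.t z = S.pos m w := by
  induction hd : n - S.pos m w using Nat.strong_induction_on generalizing z m with
  | _ d ih =>
  obtain ⟨hzw, -, -⟩ := h.pos_eq
  have hle := (h.pos_le_and_lt_pos h.1 le_rfl).2
  by_contra hne
  have hp' : S.pos S.t z ≤ S.pos 0 w := by
    rw [pos_zero]
    exact hw _
  obtain ⟨m', -, hm'm, hm', hm'₁⟩ := Nat.exists_and_not_succ_of_le
    (P := fun r => S.pos S.t z ≤ S.pos r w) (Nat.zero_le m) hp' (by omega)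
  have := S.pos_succ_le (h.1.trans' hm'm) w
  obtain ⟨z', hz'⟩ := S.exists_crosses_of_pos_succ_lt (x := w) (h.1.trans' hm'm) (by omega)
  obtain rfl : z' = z := by
    have := ih (n - S.pos m' w) (by have := S.pos_lt m' w; omega) hz' rfl
    exact (S.pos_inj (r := S.t)).1 (by omega)
  exact hm'm.ne (hz'.eq h)

variable {S} in
/-- Both `x` and `y` are overtaken by the rightmost object, `x` first since they end in this
order and after `x` has passed `y`; to meet it, `y` must then step left from where `x` passed
it. -/
theorem Crosses.exists_crosses_gt_of_isTop (hw : IsTop w) (h : S.Crosses s x y)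
    (hy : S.pos S.t w < S.pos S.t y) : ∃ r z, s < r ∧ S.Crosses r z y := by
  have hyx := h.pos_lt_of_lt h.1 le_rfl
  have hxw : x ≠ w := by rintro rfl; omega
  have hyw : y ≠ w := by rintro rfl; omega
  obtain ⟨Tx, -, -, hTx⟩ := S.exists_crosses (Nat.zero_le S.t) le_rfl
    (S.pos_zero_lt_of_isTop hw hxw) (by omega)
  obtain ⟨Ty, -, -, hTy⟩ := S.exists_crosses (Nat.zero_le S.t) le_rfl
    (S.pos_zero_lt_of_isTop hw hyw) (by omega)
  have hTxy : Tx < Ty := by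
    by_contra hle
    have := S.pos_le_pos_of_isTop hw (not_lt.1 hle) hTx.1.le
    have := hTx.pos_t_eq_of_isTop hw
    have := hTy.pos_t_eq_of_isTop hw
    omega
  have hsTx : s < Tx := by
    by_contra hle
    rcases (not_lt.1 hle).eq_or_lt with rfl | hlt
    · have := h.pos_eq
      have := hTx.pos_eq
      exact hyw ((S.pos_inj (r := Tx)).1 (by omega))
    · have := hTy.pos_lt_of_le (r := Tx + 1) hTxy
      have := h.pos_lt_of_le (r := Tx + 1) hlt
      have := hTx.pos_lt_of_lt (r := Tx + 1) Tx.lt_succ_self hTx.1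
      omega
  have := h.pos_eq
  have := (h.pos_le_and_lt_pos h.1 le_rfl).1
  have := hTy.pos_eq
  have := hTy.pos_t_eq_of_isTop hw
  obtain ⟨r, hr, hrTy, hr₀, hr₁⟩ := Nat.exists_and_not_succ_of_le
    (P := fun r => S.pos (s + 1) y ≤ S.pos r y) (by omega : s + 1 ≤ Ty) le_rfl (by omega)
  obtain ⟨z, hz⟩ := S.exists_crosses_of_pos_succ_lt (x := y) (hrTy.trans hTy.1) (by omega)
  exact ⟨r, z, hr, hz⟩

theorem not_crosses_of_isTop (hw : IsTop w) (hy : S.pos S.t w < S.pos S.t y) :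
    ¬S.Crosses s x y := by
  intro h
  induction hd : S.t - s using Nat.strong_induction_on generalizing x s with
  | _ d ih =>
  obtain ⟨r, z, hsr, hr⟩ := h.exists_crosses_gt_of_isTop hw hy
  exact ih _ (by have := hr.1; omega) hr rfl

end Wall

theorem swapSeq_rev {u : Fin n → Fin n → ℕ} {σ : ℕ → Assignment n} {t : ℕ}
    (h : SwapSeq pathAdj u σ t) :
    SwapSeq pathAdj (fun q x => u q.rev x.rev) (fun r => Fin.revPerm * σ r * Fin.revPerm) t := by
  intro m hm
  obtain ⟨i, j, hij, hi, hj, hσ⟩ := h m hm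
  refine ⟨i.rev, j.rev, ?_, ?_, ?_, ?_⟩
  · simp only [pathAdj, Fin.val_rev] at hij ⊢
    omega
  · simpa using hi
  · simpa using hj
  · ext q
    simp [hσ, ← Fin.rev_injective.swap_apply]

def reverse : SwapRun n where
  u q x := S.u q.rev x.rev
  t := S.t
  σ r := Fin.revPerm * S.σ r * Fin.revPerm
  strictPref q := (S.strictPref q.rev).comp Fin.rev_injective
  swapSeq := swapSeq_rev S.swapSeq
  σ_zero := by ext; simp [S.σ_zero]

theorem reverse_t : S.reverse.t = S.t := rfl

theorem reverse_pos (r : ℕ) (x : Fin n) : S.reverse.pos r x + S.pos r x.rev + 1 = n := by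
  have : S.reverse.pos r x = ((S.σ r)⁻¹ x.rev).rev := by
    simp [reverse, pos, mul_inv_rev]
  rw [this, Fin.val_rev]
  have := S.pos_lt r x.rev
  unfold pos at *
  omega

variable {S} in
theorem Crosses.reverse (h : S.Crosses m x y) : S.reverse.Crosses m y.rev x.rev := by
  obtain ⟨hm, h₁, h₂⟩ := h
  have := S.reverse_pos m x.rev
  have := S.reverse_pos m y.rev
  have := S.reverse_pos (m + 1) x.rev
  have := S.reverse_pos (m + 1) y.rev
  simp only [Fin.rev_rev] at *
  exact ⟨hm, by omega, by omega⟩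

theorem not_crosses_of_isBot {z : Fin n} (hz : IsBot z) (hx : S.pos S.t x < S.pos S.t z) :
    ¬S.Crosses s x y := by
  intro h
  have := S.reverse_pos S.t z.rev
  have := S.reverse_pos S.t x.rev
  simp only [Fin.rev_rev] at *
  refine S.reverse.not_crosses_of_isTop (fun v => Fin.le_rev_iff.2 (hz v.rev)) ?_ h.reverse
  rw [reverse_t]
  omega

open Finset in
theorem card_filter_pos_mem (r : ℕ) (A : Finset ℕ) (hA : ∀ p ∈ A, p < n) :
    #{x | S.pos r x ∈ A} = #A := by
  refine card_nbij (S.pos r) (fun x hx => (mem_filter.1 hx).2) ?_ ?_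
  · exact fun x _ y _ h => (S.pos_inj).1 h
  · intro p hp
    obtain ⟨x, hx⟩ := S.exists_pos_eq r (hA p hp)
    exact ⟨x, mem_filter.2 ⟨mem_univ x, hx ▸ hp⟩, hx⟩

section Straddle

variable {S} {w z a b : Fin n}

theorem Crosses.pos_t_lt_le (hw : IsTop w) (hz : IsBot z)
    (hwz : S.pos S.t w + 1 = S.pos S.t z) (h : S.Crosses s a b) :
    S.pos S.t b < S.pos S.t z ∧ S.pos S.t z ≤ S.pos S.t a := by
  constructor
  · by_contra hle
    exact S.not_crosses_of_isTop hw (by omega) h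
  · by_contra hlt
    exact S.not_crosses_of_isBot hz (not_le.1 hlt) h

/-- Objects ending left of the boundary never cross `b`, those ending right of it never
cross `a`. -/
theorem Crosses.pos_lt_iff (hw : IsTop w) (hz : IsBot z)
    (hwz : S.pos S.t w + 1 = S.pos S.t z) (h : S.Crosses s a b) (x : Fin n) :
    S.pos s x < S.pos s a ↔
      S.pos S.t x < S.pos S.t b ∨ S.pos S.t z ≤ S.pos S.t x ∧ S.pos S.t x < S.pos S.t a := by
  obtain ⟨hb, ha⟩ := h.pos_t_lt_le hw hz hwz
  have hba := h.pos_lt_of_lt h.1 le_rfl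
  have := h.pos_eq
  rcases eq_or_ne x a with rfl | hxa
  · omega
  rcases eq_or_ne x b with rfl | hxb
  · omega
  have hne : ∀ r y, x ≠ y → S.pos r x ≠ S.pos r y := fun r y hxy e => hxy ((S.pos_inj).1 e)
  have := hne s a hxa
  have := hne s b hxb
  rcases lt_or_ge (S.pos S.t x) (S.pos S.t z) with hx | hx
  · have := S.pos_lt_pos_iff_of_forall_not_crosses (fun _ => S.not_crosses_of_isBot hz hx)
      (fun _ => S.not_crosses_of_isBot hz hb) hxb h.1.le
    omega
  · have := S.pos_lt_pos_iff_of_forall_not_crosses (fun _ => S.not_crosses_of_isTop hw (by omega))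
      (fun _ => S.not_crosses_of_isTop hw (by omega)) hxa h.1.le
    omega

open Finset in
/-- Count the objects to the left of `a` at the moment of the crossing. -/
theorem Crosses.pos_add_pos_t (hw : IsTop w) (hz : IsBot z)
    (hwz : S.pos S.t w + 1 = S.pos S.t z) (h : S.Crosses s a b) :
    S.pos s a + S.pos S.t z = S.pos S.t a + S.pos S.t b := by
  obtain ⟨hb, ha⟩ := h.pos_t_lt_le hw hz hwz
  have hdisj : Disjoint (range (S.pos S.t b)) (Ico (S.pos S.t z) (S.pos S.t a)) :=
    disjoint_left.2 fun p hp hp' => by simp only [mem_range, mem_Ico] at hp hp'; omega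
  have hcount : S.pos s a = S.pos S.t b + (S.pos S.t a - S.pos S.t z) := calc
    S.pos s a = #{x | S.pos s x ∈ range (S.pos s a)} := by
      rw [S.card_filter_pos_mem s _ fun p hp => (mem_range.1 hp).trans (S.pos_lt s a),
        card_range]
    _ = #{x | S.pos S.t x ∈ range (S.pos S.t b) ∪ Ico (S.pos S.t z) (S.pos S.t a)} := by
      congr 1
      ext x
      simpa only [mem_filter, mem_univ, true_and, mem_union, mem_range, mem_Ico] using
        h.pos_lt_iff hw hz hwz x
    _ = S.pos S.t b + (S.pos S.t a - S.pos S.t z) := by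
      rw [S.card_filter_pos_mem S.t _ fun p hp => ?_, card_union_of_disjoint hdisj, card_range,
        Nat.card_Ico]
      simp only [mem_union, mem_range, mem_Ico] at hp
      have := S.pos_lt S.t a
      omega
  omega

end Straddle

theorem u_lt_of_mem_uIcc {q : Fin n} (hxy : x ≠ y) (h₁₂ : r₁ ≤ r₂) (h₂₃ : r₂ ≤ r₃)
    (h₃₄ : r₃ ≤ r₄) (h₄ : r₄ ≤ S.t) (hx : (q : ℕ) ∈ Set.uIcc (S.pos r₁ x) (S.pos r₂ x))
    (hy : (q : ℕ) ∈ Set.uIcc (S.pos r₃ y) (S.pos r₄ y)) : S.u q x < S.u q y := by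
  obtain ⟨rx, -, hrx, hx⟩ := S.exists_pos_eq_of_mem_uIcc h₁₂ (h₂₃.trans (h₃₄.trans h₄)) hx
  obtain ⟨ry, hry, hry', hy⟩ := S.exists_pos_eq_of_mem_uIcc h₃₄ h₄ hy
  exact S.u_lt_of_pos_eq (r₁ := rx) (r₂ := ry) (by omega) (by omega) hxy hx hy

variable {S} in
theorem Crosses.u_lt_u_of_le_pos (h : S.Crosses s x y) {q : Fin n} (hxq : S.pos 0 x ≤ q)
    (hyq : S.pos S.t y ≤ q) (hq : (q : ℕ) ≤ S.pos s x) : S.u q x < S.u q y := by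
  have := h.pos_eq
  exact S.u_lt_of_mem_uIcc h.ne (Nat.zero_le s) (Nat.le_add_right s 1) h.1 le_rfl
    (Set.mem_uIcc.2 (by omega)) (Set.mem_uIcc.2 (by omega))

variable {S} in
theorem Crosses.u_lt_u_of_pos_lt (h : S.Crosses s x y) {q : Fin n} (hq : S.pos s x < q)
    (hyq : (q : ℕ) ≤ S.pos 0 y) (hxq : (q : ℕ) ≤ S.pos S.t x) : S.u q y < S.u q x := by
  have := h.pos_eq
  exact S.u_lt_of_mem_uIcc h.ne.symm (Nat.zero_le s) (Nat.le_add_right s 1) h.1 le_rfl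
    (Set.mem_uIcc.2 (by omega)) (Set.mem_uIcc.2 (by omega))

end SwapRun

/-- 0-indexed: the paper's `c = a'+b'-k+1` in 1-indexed positions equals `a'+b'+1-k`. -/
theorem crossing_swap_preferences {n : ℕ} (hn : 0 < n)
    (u : Fin n → Fin n → ℕ) (hu : StrictPref u)
    (t : ℕ) (σseq : ℕ → Assignment n) (h0 : σseq 0 = 1)
    (hseq : SwapSeq pathAdj u σseq t)
    (k : ℕ) (hk1 : 1 ≤ k)
    (hK : (((σseq t)⁻¹) ⟨0, hn⟩).val = k)
    (hK1 : (((σseq t)⁻¹) ⟨n - 1, by omega⟩).val = k - 1)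
    (a b : Fin n) (hab : a.val < b.val)
    (hQ : (Set.Icc a.val (((σseq t)⁻¹) a).val ∩
            Set.Icc (((σseq t)⁻¹) b).val b.val).Nonempty) :
    let a' : ℕ := (((σseq t)⁻¹) a).val
    let b' : ℕ := (((σseq t)⁻¹) b).val
    let c : ℤ := (a' : ℤ) + b' + 1 - k
    (∀ q : Fin n, max a.val b' ≤ q.val → (q.val : ℤ) < c → u q b > u q a) ∧
    (∀ q : Fin n, c ≤ (q.val : ℤ) → q.val ≤ min a' b.val → u q a > u q b) := by
  intro a' b' c
  let S : SwapRun n := ⟨u, t, σseq, hu, hseq, h0⟩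
  have hw : IsTop (⟨n - 1, by omega⟩ : Fin n) := fun x =>
    Fin.le_def.2 (Nat.le_sub_one_of_lt x.isLt)
  have hz : IsBot (⟨0, hn⟩ : Fin n) := fun x => Fin.le_def.2 (Nat.zero_le _)
  have hk : S.pos S.t ⟨0, hn⟩ = k := hK
  have hwz : S.pos S.t ⟨n - 1, by omega⟩ + 1 = S.pos S.t ⟨0, hn⟩ := by
    change ((σseq t)⁻¹ ⟨n - 1, _⟩).val + 1 = _
    rw [hK1, hk]
    omega
  have ha' : S.pos S.t a = a' := rfl
  have hb' : S.pos S.t b = b' := rfl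
  have hc : c = (a' : ℤ) + b' + 1 - k := rfl
  obtain ⟨p, ⟨-, hpa'⟩, hb'p, -⟩ := hQ
  have hba' : b' < a' := lt_of_le_of_ne (hb'p.trans hpa') fun e =>
    Fin.ne_of_val_ne hab.ne ((S.pos_inj (r := S.t)).1 e.symm)
  obtain ⟨s, -, -, hs⟩ := S.exists_crosses (Nat.zero_le t) le_rfl
    (by simpa only [SwapRun.pos_zero] using hab) hba'
  have hsum := hs.pos_add_pos_t hw hz hwz
  refine ⟨fun q hq hqc => ?_, fun q hcq hq => ?_⟩
  · obtain ⟨haq, hb'q⟩ := max_le_iff.1 hq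
    exact hs.u_lt_u_of_le_pos (by rwa [SwapRun.pos_zero]) hb'q (by omega)
  · obtain ⟨hqa', hqb⟩ := le_min_iff.1 hq
    exact hs.u_lt_u_of_pos_lt (by omega) (by rwa [SwapRun.pos_zero]) hqa'
end

section
/- In a star with center agent n and weak preferences, if k ≠ n and agent n strictly prefers o_1 to o_k, then object o_1 is not reachable for leaf agent k. -/
/-- A rational swap under weak preferences (`u j o` is agent `j`'s utility for object `o`,
so `o ⪰_j o'` iff `u j o ≥ u j o'`): two adjacent agents exchange objects, each receiving
an object at least as good as the one given up. -/
def WeakSwapStep {n : ℕ} (adj : Fin n → Fin n → Prop) (u : Fin n → Fin n → ℕ)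
    (σ σ' : Assignment n) : Prop :=
  ∃ a b : Fin n, adj a b ∧ u a (σ b) ≥ u a (σ a) ∧ u b (σ a) ≥ u b (σ b) ∧
    σ' = σ * Equiv.swap a b

/-- `σseq 0, σseq 1, …, σseq t` is a sequence of swaps under weak preferences. -/
def WeakSwapSeq {n : ℕ} (adj : Fin n → Fin n → Prop) (u : Fin n → Fin n → ℕ)
    (σseq : ℕ → Assignment n) (t : ℕ) : Prop :=
  ∀ m < t, WeakSwapStep adj u (σseq m) (σseq (m + 1))

/-- Adjacency of the star with center `c`: every other agent is a leaf adjacent only to `c`. -/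
def starAdj {n : ℕ} (c : Fin n) (i j : Fin n) : Prop := (i = c ∨ j = c) ∧ i ≠ j

/-- `σ` is reachable from the identity endowment via weak rational swaps. -/
def WReachableAssign {n : ℕ} (adj : Fin n → Fin n → Prop) (u : Fin n → Fin n → ℕ)
    (σ : Assignment n) : Prop :=
  ∃ t σseq, σseq 0 = 1 ∧ WeakSwapSeq adj u σseq t ∧ σseq t = σ

/-- Object `o` is reachable for agent `k` from the identity endowment via weak rational swaps. -/
def WReachableObj {n : ℕ} (adj : Fin n → Fin n → Prop) (u : Fin n → Fin n → ℕ)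
    (k o : Fin n) : Prop :=
  ∃ t σseq, σseq 0 = 1 ∧ WeakSwapSeq adj u σseq t ∧ σseq t k = o

/-- 0-indexed: object `o_1` is index `0`, the center agent `n` is index `n-1`:
in a star with center `n-1` and weak preferences, if `k` is a leaf agent (`k ≠ n-1`) and the
center strictly prefers `o_1` to `o_k`, then `o_1` is not reachable for agent `k`. -/
theorem star_not_reachable_of_center_prefers {n : ℕ} (hn : 1 < n)
    (u : Fin n → Fin n → ℕ)
    (k : Fin n) (hk : k ≠ ⟨n - 1, by omega⟩)
    (hpref : u ⟨n - 1, by omega⟩ ⟨0, by omega⟩ > u ⟨n - 1, by omega⟩ k) :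
    ¬ WReachableObj (starAdj ⟨n - 1, by omega⟩) u k ⟨0, by omega⟩ := by
  set c : Fin n := ⟨n - 1, by omega⟩ with hc
  rintro ⟨t, σseq, h0, hseq, hend⟩
  have key : ∀ m ≤ t, u c (σseq m k) ≤ u c k := by
    intro m
    induction m with
    | zero => intro _; rw [h0]; simp
    | succ m ih =>
      intro hm
      obtain ⟨a, b, ⟨hadj, hab⟩, hua, hub, heq⟩ := hseq m (by omega)
      have ih' := ih (by omega)
      rw [heq]
      simp only [Equiv.Perm.mul_apply]
      rcases hadj with rfl | rfl
      · by_cases hbk : b = k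
        · subst hbk
          rw [Equiv.swap_apply_right]
          exact le_trans hua ih'
        · rw [Equiv.swap_apply_of_ne_of_ne hk (Ne.symm hbk)]
          exact ih'
      · by_cases hak : a = k
        · subst hak
          rw [Equiv.swap_apply_left]
          exact le_trans hub ih'
        · rw [Equiv.swap_apply_of_ne_of_ne (Ne.symm hak) hk]
          exact ih'
  have := key t le_rfl
  rw [hend] at this
  omega
end
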